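/- arXiv:2602.16289 — 2 statements merged into one kernel-verified Lean document; each statement's English description precedes it below -/
import Mathlib

section
/- For every k ∈ ℕ with k ≥ 2, there exists a matroid-constrained matching instance with exactly k + 1 agents, whose preferences are strict partial orders, in which no set of at most k ℐ-constrained matchings is popular; hence its weak Condorcet dimension equals its number of agents. -/
open scoped Classical

/-- A matching in a bipartite graph with agent set `A`, object set `O` and adjacency
relation `adj`, represented by the partial assignment `M : A → Option O` of objects to
agents: matched pairs are edges, and each object is matched to at most one agent. -/
def IsMatching {A O : Type*} (adj : A → O → Prop) (M : A → Option O) : Prop :=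
  (∀ a o, M a = some o → adj a o) ∧
  (∀ a a' o, M a = some o → M a' = some o → a = a')

/-- The lifted strict preference of agent `a` over matchings: `M ≻ₐ N` iff
`M(a) ≻ₐ N(a)`, where any assigned object is preferred to being unmatched. -/
def PrefM {A O : Type*} (pref : A → O → O → Prop) (a : A) (M N : A → Option O) : Prop :=
  (∃ o o', M a = some o ∧ N a = some o' ∧ pref a o o') ∨
  (∃ o, M a = some o ∧ N a = none)

/-- `pref a` is a strict partial order on the objects adjacent to `a`. -/
def IsPrefOrder {A O : Type*} (adj : A → O → Prop) (pref : A → O → O → Prop) : Prop :=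
  ∀ a : A, (∀ o, ¬ pref a o o) ∧
    (∀ o o' o'', pref a o o' → pref a o' o'' → pref a o o'') ∧
    (∀ o o', pref a o o' → adj a o ∧ adj a o')

/-- `φ(ℳ, N)`: the number of agents preferring some member of `ℳ` to `N`. -/
noncomputable def phiSet {A O : Type*} (pref : A → O → O → Prop)
    (Mset : Set (A → Option O)) (N : A → Option O) : ℕ :=
  {a : A | ∃ M ∈ Mset, PrefM pref a M N}.ncard

/-- `φ(N, ℳ)`: the number of agents preferring `N` to every member of `ℳ`. -/
noncomputable def phiOne {A O : Type*} (pref : A → O → O → Prop)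
    (N : A → Option O) (Mset : Set (A → Option O)) : ℕ :=
  {a : A | ∀ M ∈ Mset, PrefM pref a N M}.ncard

/-- `Mset` is popular (weakly Condorcet-winning) among the feasible matchings `F`:
`μ(ℳ, N) ≥ 0`, i.e. `φ(N, ℳ) ≤ φ(ℳ, N)`, for every feasible `N`. -/
def Popular {A O : Type*} (pref : A → O → O → Prop) (F : Set (A → Option O))
    (Mset : Set (A → Option O)) : Prop :=
  ∀ N ∈ F, phiOne pref N Mset ≤ phiSet pref Mset N

/-- The set `M(A)` of objects matched to agents. -/
def matchedObjs {A O : Type*} (M : A → Option O) : Set O := {o | ∃ a, M a = some o}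

/-- A matching is `ℐ`-constrained if the set of matched objects is independent. -/
def IsConstrained {A O : Type*} (adj : A → O → Prop) (Mat : Matroid O)
    (M : A → Option O) : Prop :=
  IsMatching adj M ∧ Mat.Indep (matchedObjs M)

/-!
Each agent `a` owns bottom objects `(a, l)` with `l : Fin (m * m + 1)` and top objects `(a, f)`
with `f : Fin m → Fin (m * m + 1)`, and prefers `(a, f)` to `(a, l)` exactly when `l ∈ range f`;
the matroid allows at most one top object to be matched. A constrained matching therefore gives a
top object to at most one agent, so among `m < |A|` matchings `M t` some agent `b` receives a top
object in none of them. Let `N` give `b` the top object `t ↦ l_t` listing the bottoms `b` holds in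
the `M t`, and every other agent `a` a bottom object outside the ranges of the at most `m` top
objects `a` holds in the `M t`, which cover at most `m * m` values. Then `b` prefers `N` to every
`M t` while nobody prefers any `M t` to `N`. Conversely, the `|A|` matchings that each give a
single agent a top object form a popular set, since top objects are maximal.
-/

open Set

lemma Set.Finite.ncard_biUnion_le_of_subsingleton {ι α : Type*} {t : Set ι} (ht : t.Finite)
    {s : ι → Set α} (hs : ∀ i ∈ t, (s i).Subsingleton) : (⋃ i ∈ t, s i).ncard ≤ t.ncard := by
  calc (⋃ i ∈ t, s i).ncard = (⋃ i ∈ ht.toFinset, s i).ncard := by simp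
    _ ≤ ∑ i ∈ ht.toFinset, (s i).ncard := ht.toFinset.set_ncard_biUnion_le s
    _ ≤ ∑ i ∈ ht.toFinset, 1 := Finset.sum_le_sum fun i hi => by
      have hsi := hs i (ht.mem_toFinset.1 hi)
      exact (ncard_le_one hsi.finite).2 hsi
    _ = t.ncard := by simp [ncard_eq_toFinset_card t ht]

lemma Set.Finite.exists_fin_subset_range {α : Type*} [Nonempty α] {s : Set α} (hs : s.Finite)
    {m : ℕ} (hm : s.ncard ≤ m) : ∃ g : Fin m → α, s ⊆ range g := by
  obtain ⟨n, f, hf, rfl⟩ := hs.fin_param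
  rw [ncard_range_of_injective hf, Nat.card_eq_fintype_card, Fintype.card_fin] at hm
  refine ⟨fun t => if h : (t : ℕ) < n then f ⟨t, h⟩ else Classical.arbitrary α, ?_⟩
  rintro _ ⟨i, rfl⟩
  exact ⟨Fin.castLE hm i, by simp⟩

noncomputable def Matroid.freeParallel {α : Type*} (T : Set α) : Matroid α :=
  (Matroid.freeOn univ).comap fun x => if x ∈ T then none else some x

lemma Matroid.freeParallel_ground {α : Type*} (T : Set α) : (Matroid.freeParallel T).E = univ := by
  simp [Matroid.freeParallel]

lemma Matroid.freeParallel_indep_iff {α : Type*} {T I : Set α} :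
    (Matroid.freeParallel T).Indep I ↔ (I ∩ T).Subsingleton := by
  simp only [Matroid.freeParallel, Matroid.comap_indep_iff, Matroid.freeOn_indep_iff,
    subset_univ, true_and]
  constructor
  · rintro h x ⟨hxI, hxT⟩ y ⟨hyI, hyT⟩
    exact h hxI hyI (by simp [hxT, hyT])
  · intro h x hx y hy hxy
    by_cases hxT : x ∈ T <;> by_cases hyT : y ∈ T <;> simp [hxT, hyT] at hxy
    · exact h ⟨hx, hxT⟩ ⟨hy, hyT⟩
    · exact hxy

def IsPopularSet {A O : Type*} (adj : A → O → Prop) (pref : A → O → O → Prop) (Mat : Matroid O)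
    (Mset : Set (A → Option O)) : Prop :=
  (∀ M ∈ Mset, IsConstrained adj Mat M) ∧ Popular pref {M | IsConstrained adj Mat M} Mset

lemma PrefM.iff_of_eq_some {A O : Type*} {pref : A → O → O → Prop} {a : A}
    {M N : A → Option O} {o' : O} (h : N a = some o') :
    PrefM pref a M N ↔ ∃ o, M a = some o ∧ pref a o o' := by
  simp [PrefM, h]

section Relabel

variable {A O O' : Type*}

lemma IsPrefOrder.comap {adj : A → O → Prop} {pref : A → O → O → Prop}
    (h : IsPrefOrder adj pref) (σ : O' → O) :
    IsPrefOrder (fun a o => adj a (σ o)) (fun a o o' => pref a (σ o) (σ o')) :=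
  fun a => ⟨fun o => (h a).1 (σ o), fun _ _ _ => (h a).2.1 _ _ _, fun _ _ => (h a).2.2 _ _⟩

variable (σ : O' ≃ O)

def matchingCongr : (A → Option O') ≃ (A → Option O) :=
  Equiv.piCongrRight fun _ => σ.optionCongr

@[simp]
lemma matchingCongr_apply (M : A → Option O') (a : A) : matchingCongr σ M a = (M a).map σ :=
  rfl

lemma matchedObjs_matchingCongr (M : A → Option O') :
    matchedObjs (matchingCongr σ M) = σ '' matchedObjs M := by
  ext o
  simp only [matchedObjs, matchingCongr_apply, Option.map_eq_some_iff, mem_ofPred_eq, mem_image]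
  tauto

variable {σ}

lemma isConstrained_comap_iff {adj : A → O → Prop} {Mat : Matroid O} {M : A → Option O'} :
    IsConstrained (fun a o => adj a (σ o)) (Mat.comap σ) M ↔
      IsConstrained adj Mat (matchingCongr σ M) := by
  simp only [IsConstrained, IsMatching, Matroid.comap_indep_iff, matchedObjs_matchingCongr,
    σ.injective.injOn, and_true, matchingCongr_apply, Option.map_eq_some_iff,
    forall_exists_index, and_imp]
  constructor
  · rintro ⟨⟨hadj, hinj⟩, hI⟩
    refine ⟨⟨?_, ?_⟩, hI⟩
    · rintro a _ o h rfl
      exact hadj a o h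
    · rintro a a' _ o h rfl o' h' he
      exact hinj a a' o h (σ.injective he ▸ h')
  · rintro ⟨⟨hadj, hinj⟩, hI⟩
    exact ⟨⟨fun a o h => hadj a _ o h rfl, fun a a' o h h' => hinj a a' _ o h rfl o h' rfl⟩, hI⟩

lemma prefM_comap_iff {pref : A → O → O → Prop} {a : A} {M N : A → Option O'} :
    PrefM (fun a o o' => pref a (σ o) (σ o')) a M N ↔
      PrefM pref a (matchingCongr σ M) (matchingCongr σ N) := by
  simp [PrefM, Option.map_eq_some_iff]

lemma phiSet_comap {pref : A → O → O → Prop} (Mset : Set (A → Option O')) (N : A → Option O') :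
    phiSet (fun a o o' => pref a (σ o) (σ o')) Mset N =
      phiSet pref (matchingCongr σ '' Mset) (matchingCongr σ N) := by
  simp only [phiSet, prefM_comap_iff, exists_mem_image]

lemma phiOne_comap {pref : A → O → O → Prop} (N : A → Option O') (Mset : Set (A → Option O')) :
    phiOne (fun a o o' => pref a (σ o) (σ o')) N Mset =
      phiOne pref (matchingCongr σ N) (matchingCongr σ '' Mset) := by
  simp only [phiOne, prefM_comap_iff, forall_mem_image]

lemma isPopularSet_comap_iff {adj : A → O → Prop} {pref : A → O → O → Prop} {Mat : Matroid O}
    {Mset : Set (A → Option O')} :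
    IsPopularSet (fun a o => adj a (σ o)) (fun a o o' => pref a (σ o) (σ o')) (Mat.comap σ) Mset ↔
      IsPopularSet adj pref Mat (matchingCongr σ '' Mset) := by
  simp only [IsPopularSet, Popular, mem_ofPred_eq, forall_mem_image, isConstrained_comap_iff,
    phiSet_comap, phiOne_comap]
  exact and_congr_right fun _ =>
    ⟨fun h N => by simpa using h ((matchingCongr σ).symm N), fun h N => h _⟩

end Relabel

namespace GapInstance

abbrev Obj (A : Type*) (m : ℕ) : Type _ := A × (Fin (m * m + 1) ⊕ (Fin m → Fin (m * m + 1)))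

variable {A : Type*} (m : ℕ)

def adj (a : A) (o : Obj A m) : Prop := o.1 = a

def pref (a : A) : Obj A m → Obj A m → Prop
  | (b, .inr f), (c, .inl l) => b = a ∧ c = a ∧ l ∈ range f
  | _, _ => False

def tops : Set (Obj A m) := {o | o.2.isRight}

noncomputable def matroid : Matroid (Obj A m) := Matroid.freeParallel (tops m)

def topped (M : A → Option (Obj A m)) : Set A := {a | ∃ o ∈ tops m, M a = some o}

variable {m}

lemma pref_tops {a : A} {o o' : Obj A m} (h : pref m a o o') : o ∈ tops m ∧ o' ∉ tops m := by
  rcases o with ⟨b, l | f⟩ <;> rcases o' with ⟨c, l' | f'⟩ <;> simp_all [pref, tops]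

lemma pref_inl_iff {a : A} {o : Obj A m} {l : Fin (m * m + 1)} :
    pref m a o (a, .inl l) ↔ ∃ f, o = (a, .inr f) ∧ l ∈ range f := by
  rcases o with ⟨b, l' | f⟩ <;> simp [pref]

variable (m) in
lemma isPrefOrder : IsPrefOrder (adj (A := A) m) (pref m) := by
  refine fun a => ⟨fun o h => (pref_tops h).2 (pref_tops h).1,
    fun o o' o'' h h' => absurd (pref_tops h').1 (pref_tops h).2, fun o o' h => ?_⟩
  rcases o with ⟨b, l | f⟩ <;> rcases o' with ⟨c, l' | f'⟩ <;> simp_all [pref, adj]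

lemma isConstrained_iff {M : A → Option (Obj A m)} :
    IsConstrained (adj m) (matroid m) M ↔
      (∀ a o, M a = some o → o.1 = a) ∧ (topped m M).Subsingleton := by
  have hmatch : IsMatching (adj m) M ↔ ∀ a o, M a = some o → o.1 = a :=
    ⟨fun h => h.1, fun h => ⟨h, fun a a' o ha ha' => (h a o ha).symm.trans (h a' o ha')⟩⟩
  rw [IsConstrained, hmatch, matroid, Matroid.freeParallel_indep_iff]
  refine and_congr_right fun hown => ⟨?_, ?_⟩
  · rintro h a ⟨o, ho, hao⟩ a' ⟨o', ho', hao'⟩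
    rw [← hown a o hao, ← hown a' o' hao', h ⟨⟨a, hao⟩, ho⟩ ⟨⟨a', hao'⟩, ho'⟩]
  · rintro h o ⟨⟨a, hao⟩, ho⟩ o' ⟨⟨a', hao'⟩, ho'⟩
    obtain rfl := h ⟨o, ho, hao⟩ ⟨o', ho', hao'⟩
    exact Option.some_injective _ (hao.symm.trans hao')

lemma popular_of_forall_mem_topped (F : Set (A → Option (Obj A m)))
    {Mset : Set (A → Option (Obj A m))} (h : ∀ a, ∃ M ∈ Mset, a ∈ topped m M) :
    Popular (pref m) F Mset := by
  intro N _
  suffices {a | ∀ M ∈ Mset, PrefM (pref m) a N M} = ∅ by simp [phiOne, this]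
  refine eq_empty_iff_forall_notMem.2 fun a hN => ?_
  obtain ⟨M, hM, o, ho, hMa⟩ := h a
  obtain ⟨p, -, hp⟩ := (PrefM.iff_of_eq_some hMa).1 (hN M hM)
  exact (pref_tops hp).2 ho

variable (m) in
noncomputable def singleTop (j : A) : A → Option (Obj A m) := fun a =>
  if a = j then some (a, .inr 0) else none

lemma singleTop_injective : Function.Injective (singleTop (A := A) m) := fun j j' h => by
  simpa [singleTop] using congrFun h j

lemma isConstrained_singleTop (j : A) : IsConstrained (adj m) (matroid m) (singleTop m j) := by
  refine isConstrained_iff.2 ⟨fun a o h => ?_, fun a ha a' ha' => ?_⟩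
  · by_cases haj : a = j <;> simp [singleTop, haj] at h
    simp [← h, haj]
  · obtain ⟨_, -, ha⟩ := ha
    obtain ⟨_, -, ha'⟩ := ha'
    by_cases haj : a = j <;> by_cases haj' : a' = j <;> simp_all [singleTop]

variable (m) in
theorem isPopularSet_range_singleTop :
    IsPopularSet (adj m) (pref m) (matroid m) (range (singleTop (A := A) m)) :=
  ⟨forall_mem_range.2 isConstrained_singleTop, popular_of_forall_mem_topped _ fun a =>
    ⟨_, mem_range_self a, (a, .inr 0), rfl, by simp [singleTop]⟩⟩

variable (m) in
def bottomOf : Option (Obj A m) → Fin (m * m + 1)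
  | some (_, .inl l) => l
  | _ => 0

variable (m) in
def topOf : Option (Obj A m) → Fin m → Fin (m * m + 1)
  | some (_, .inr f) => f
  | _ => 0

lemma exists_bottom_avoiding_topOf (g : Fin m → A → Option (Obj A m)) (a : A) :
    ∃ l, ∀ t s, topOf m (g t a) s ≠ l := by
  by_contra! h
  have := Fintype.card_le_of_surjective (fun ts : Fin m × Fin m => topOf m (g ts.1 a) ts.2)
    fun l => let ⟨t, s, hts⟩ := h l; ⟨(t, s), hts⟩
  simp at this

noncomputable def deviation (g : Fin m → A → Option (Obj A m)) (b : A) :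
    A → Option (Obj A m) := fun a =>
  if a = b then some (a, .inr fun t => bottomOf m (g t b))
  else some (a, .inl (exists_bottom_avoiding_topOf g a).choose)

section Deviation

variable (g : Fin m → A → Option (Obj A m)) (b : A)

lemma deviation_self : deviation g b b = some (b, .inr fun t => bottomOf m (g t b)) :=
  if_pos rfl

lemma deviation_of_ne {a : A} (hab : a ≠ b) :
    deviation g b a = some (a, .inl (exists_bottom_avoiding_topOf g a).choose) :=
  if_neg hab

lemma isConstrained_deviation : IsConstrained (adj m) (matroid m) (deviation g b) := by
  refine isConstrained_iff.2 ⟨fun a o h => ?_, (subsingleton_singleton (a := b)).anti ?_⟩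
  · by_cases hab : a = b
    · subst hab
      rw [deviation_self, Option.some.injEq] at h
      simp [← h]
    · rw [deviation_of_ne g b hab, Option.some.injEq] at h
      simp [← h]
  · rintro a ⟨o, ho, hao⟩
    by_contra hab
    rw [deviation_of_ne g b hab, Option.some.injEq] at hao
    simp [← hao, tops] at ho

lemma prefM_deviation_self {M : A → Option (Obj A m)} (hg : M ∈ range g)
    (hM : IsMatching (adj m) M) (hb : b ∉ topped m M) :
    PrefM (pref m) b (deviation g b) M := by
  obtain ⟨t, rfl⟩ := hg
  cases h : g t b with
  | none => exact Or.inr ⟨_, deviation_self g _, h⟩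
  | some o =>
    obtain ⟨c, l | f⟩ := o
    · obtain rfl : c = b := hM.1 b _ h
      refine (PrefM.iff_of_eq_some h).2 ⟨_, deviation_self g _, ?_⟩
      simp only [pref, true_and]
      exact ⟨t, by simp [h, bottomOf]⟩
    · exact absurd ⟨_, by simp [tops], h⟩ hb

lemma not_prefM_deviation {M : A → Option (Obj A m)} (hg : M ∈ range g) (a : A) :
    ¬ PrefM (pref m) a M (deviation g b) := by
  obtain ⟨t, rfl⟩ := hg
  by_cases hab : a = b
  · subst hab
    rw [PrefM.iff_of_eq_some (deviation_self g a)]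
    rintro ⟨o, -, ho⟩
    exact (pref_tops ho).2 (by simp [tops])
  · rw [PrefM.iff_of_eq_some (deviation_of_ne g b hab), not_exists]
    rintro o ⟨ho, hpref⟩
    obtain ⟨f, rfl, s, hs⟩ := pref_inl_iff.1 hpref
    exact (exists_bottom_avoiding_topOf g a).choose_spec t s (by simp [ho, topOf, hs])

end Deviation

lemma exists_forall_notMem_topped [Finite A] {Mset : Set (A → Option (Obj A m))}
    (hfeas : ∀ M ∈ Mset, IsConstrained (adj m) (matroid m) M) (hcard : Mset.ncard < Nat.card A) :
    ∃ b, ∀ M ∈ Mset, b ∉ topped m M := by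
  by_contra! h
  have hunion : (⋃ M ∈ Mset, topped m M) = univ :=
    eq_univ_of_forall fun b => by simpa using h b
  have := (toFinite Mset).ncard_biUnion_le_of_subsingleton fun M hM =>
    (isConstrained_iff.1 (hfeas M hM)).2
  rw [hunion, ncard_univ] at this
  omega

theorem ncard_lt_of_isPopularSet [Finite A] (hm : m < Nat.card A)
    {Mset : Set (A → Option (Obj A m))} (hpop : IsPopularSet (adj m) (pref m) (matroid m) Mset) :
    m < Mset.ncard := by
  by_contra! hcard
  obtain ⟨hfeas, hpop⟩ := hpop
  obtain ⟨b, hb⟩ := exists_forall_notMem_topped hfeas (hcard.trans_lt hm)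
  obtain ⟨g, hg⟩ := (toFinite Mset).exists_fin_subset_range hcard
  have hwin : 0 < phiOne (pref m) (deviation g b) Mset :=
    (ncard_pos (toFinite _)).2
      ⟨b, fun M hM => prefM_deviation_self g b (hg hM) (hfeas M hM).1 (hb M hM)⟩
  have hlose : phiSet (pref m) Mset (deviation g b) = 0 := by
    rw [phiSet, ncard_eq_zero (toFinite _), eq_empty_iff_forall_notMem]
    rintro a ⟨M, hM, h⟩
    exact not_prefM_deviation g b (hg hM) a h
  have := hpop _ (isConstrained_deviation g b)
  omega

end GapInstance

theorem exists_matroid_instance_weak_condorcet_dimension_eq_agents_general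
    (k : ℕ) :
    ∃ (nO : ℕ) (adj : Fin (k + 1) → Fin nO → Prop)
      (pref : Fin (k + 1) → Fin nO → Fin nO → Prop) (Mat : Matroid (Fin nO)),
      Mat.E = Set.univ ∧ IsPrefOrder adj pref ∧
      (∀ Mset : Set (Fin (k + 1) → Option (Fin nO)),
        (∀ M ∈ Mset, IsConstrained adj Mat M) → Mset.ncard ≤ k →
        ¬ Popular pref {M | IsConstrained adj Mat M} Mset) ∧
      (∃ Mset : Set (Fin (k + 1) → Option (Fin nO)),
        (∀ M ∈ Mset, IsConstrained adj Mat M) ∧ Mset.ncard ≤ k + 1 ∧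
        Popular pref {M | IsConstrained adj Mat M} Mset) := by
  open GapInstance in
  let σ := (Fintype.equivFin (Obj (Fin (k + 1)) k)).symm
  refine ⟨_, fun a o => adj k a (σ o), fun a o o' => pref k a (σ o) (σ o'), (matroid k).comap σ,
    by simp [matroid, Matroid.freeParallel_ground], (isPrefOrder k).comap σ, ?_, ?_⟩
  · intro Mset hfeas hcard hpop
    have hlt := ncard_lt_of_isPopularSet (by simp) (isPopularSet_comap_iff.1 ⟨hfeas, hpop⟩)
    exact hlt.not_ge ((ncard_image_le (toFinite _)).trans hcard)
  · have hpop := isPopularSet_comap_iff.2 <| by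
      rw [(matchingCongr σ).image_symm_image]
      exact isPopularSet_range_singleTop (A := Fin (k + 1)) k
    refine ⟨_, hpop.1, ?_, hpop.2⟩
    rw [ncard_image_of_injective _ (Equiv.injective _),
      ncard_range_of_injective singleTop_injective, Nat.card_eq_fintype_card, Fintype.card_fin]

/-- For every `k ≥ 2`, there is a matroid-constrained matching
instance with exactly `k + 1` agents and partial-order preferences in which no set of
at most `k` `ℐ`-constrained matchings is popular, while some popular set of at most
`k + 1` such matchings exists; hence its weak Condorcet dimension equals its number of
agents. -/
theorem exists_matroid_instance_weak_condorcet_dimension_eq_agents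
    (k : ℕ) (hk : 2 ≤ k) :
    ∃ (nO : ℕ) (adj : Fin (k + 1) → Fin nO → Prop)
      (pref : Fin (k + 1) → Fin nO → Fin nO → Prop) (Mat : Matroid (Fin nO)),
      Mat.E = Set.univ ∧ IsPrefOrder adj pref ∧
      (∀ Mset : Set (Fin (k + 1) → Option (Fin nO)),
        (∀ M ∈ Mset, IsConstrained adj Mat M) → Mset.ncard ≤ k →
        ¬ Popular pref {M | IsConstrained adj Mat M} Mset) ∧
      (∃ Mset : Set (Fin (k + 1) → Option (Fin nO)),
        (∀ M ∈ Mset, IsConstrained adj Mat M) ∧ Mset.ncard ≤ k + 1 ∧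
        Popular pref {M | IsConstrained adj Mat M} Mset) :=
  exists_matroid_instance_weak_condorcet_dimension_eq_agents_general k
end

section
/- There exists an assignment instance (a matching instance with strict rankings in which the feasible alternatives are the perfect matchings of G) together with a set {M₁, M₂} of two perfect matchings that is Pareto-optimal among sets of perfect matchings but is not popular: there is a perfect matching N with μ({M₁, M₂}, N) < 0. -/
open scoped Classical

/-- Preferences are strict rankings: each `pref a` is a strict linear order on the
objects adjacent to `a`. -/
def IsStrictRanking {A O : Type*} (adj : A → O → Prop) (pref : A → O → O → Prop) : Prop :=
  IsPrefOrder adj pref ∧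
  ∀ a o o', adj a o → adj a o' → o ≠ o' → pref a o o' ∨ pref a o' o

/-- A set `Y` of matchings Pareto-dominates a set `Z`. -/
def Dominates {A O : Type*} (pref : A → O → O → Prop)
    (Y Z : Set (A → Option O)) : Prop :=
  Y.ncard ≤ Z.ncard ∧
  (∀ a : A, ∃ MY ∈ Y, ∀ MZ ∈ Z, ¬ PrefM pref a MZ MY) ∧
  (∃ a : A, ∃ MY ∈ Y, ∀ MZ ∈ Z, PrefM pref a MY MZ)

/-- `Mset` is Pareto-optimal: no set of feasible matchings Pareto-dominates it. -/
def ParetoOptimal {A O : Type*} (pref : A → O → O → Prop) (F : Set (A → Option O))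
    (Mset : Set (A → Option O)) : Prop :=
  ¬ ∃ Y : Set (A → Option O), Y ⊆ F ∧ Dominates pref Y Mset

/-- A perfect matching: every agent and every object is matched. -/
def IsPerfect {A O : Type*} (adj : A → O → Prop) (M : A → Option O) : Prop :=
  IsMatching adj M ∧ (∀ a : A, M a ≠ none) ∧ (∀ o : O, ∃ a : A, M a = some o)

/-! Five agents `0, …, 4` and five objects `0, …, 4`, with preference lists (best first)
`0 : 4 0`, `1 : 0 1`, `2 : 4 2 3`, `3 : 1 3`, `4 : 4 2`.
The only perfect matchings are `M₁ = (0 1 2 3 4)`, `M₂ = (0 1 4 3 2)` and `N = (4 0 3 1 2)`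
(agent `i` gets the `i`-th entry). Agents `0, 1, 3` prefer `N` to both `M₁` and `M₂`, and only
agents `2, 4` prefer one of them to `N`, so `μ({M₁, M₂}, N) = 2 - 3 < 0`. Yet `{M₁, M₂}` is
Pareto-optimal: `M₁` is the only perfect matching giving agent `4` its top object and `M₂` the
only one giving agent `2` its top object, so a dominating set must contain both of them and, to
make some agent strictly better off, also `N`, which makes it too large. -/

section General

variable {A O : Type*}

theorem PrefM.irrefl {pref : A → O → O → Prop} {a : A} (h : ∀ o, ¬ pref a o o)
    (M : A → Option O) : ¬ PrefM pref a M M := by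
  rintro (⟨o, o', hMo, hMo', ho⟩ | ⟨o, hMo, hMn⟩)
  · obtain rfl : o = o' := Option.some_injective _ (hMo.symm.trans hMo')
    exact h o ho
  · exact Option.some_ne_none o (hMo.symm.trans hMn)

instance PrefM.decidable [Fintype O] [DecidableEq O] (pref : A → O → O → Prop)
    [∀ a, DecidableRel (pref a)] (a : A) (M N : A → Option O) :
    Decidable (PrefM pref a M N) := by
  unfold PrefM; infer_instance

theorem isPerfect_some_comp_iff {adj : A → O → Prop} {f : A → O} :
    IsPerfect adj (some ∘ f) ↔ (∀ a, adj a (f a)) ∧ Function.Bijective f := by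
  simp only [IsPerfect, IsMatching, Function.comp_apply, Option.some.injEq, ne_eq,
    reduceCtorEq, not_false_eq_true, implies_true, true_and, forall_eq', Function.Bijective]
  exact ⟨fun ⟨⟨hadj, hinj⟩, hsurj⟩ => ⟨hadj, fun a a' h => (hinj a' a h).symm, hsurj⟩,
    fun ⟨hadj, hinj, hsurj⟩ => ⟨⟨hadj, fun a a' h => (hinj h).symm⟩, hsurj⟩⟩

theorem IsPerfect.exists_eq_some_comp {adj : A → O → Prop} {M : A → Option O}
    (hM : IsPerfect adj M) : ∃ f : A → O, M = some ∘ f :=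
  ⟨fun a => (M a).get (Option.ne_none_iff_isSome.1 (hM.2.1 a)), funext fun a => by simp⟩

theorem phiSet_pair (pref : A → O → O → Prop) (M₁ M₂ N : A → Option O) :
    phiSet pref {M₁, M₂} N = {a | PrefM pref a M₁ N ∨ PrefM pref a M₂ N}.ncard := by
  simp [phiSet]

theorem phiOne_pair (pref : A → O → O → Prop) (M₁ M₂ N : A → Option O) :
    phiOne pref N {M₁, M₂} = {a | PrefM pref a N M₁ ∧ PrefM pref a N M₂}.ncard := by
  simp [phiOne]

theorem ParetoOptimal.of_forall_exists_strictly_best [Finite A] [Finite O]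
    {pref : A → O → O → Prop} {F Z : Set (A → Option O)} (hirr : ∀ a o, ¬ pref a o o)
    (htop : ∀ M ∈ Z, ∃ a, ∀ P ∈ F, P ≠ M → PrefM pref a M P) :
    ParetoOptimal pref F Z := by
  rintro ⟨Y, hYF, hcard, hcover, a, N, hNY, hN⟩
  have hZY : Z ⊆ Y := fun M hM => by
    obtain ⟨b, hb⟩ := htop M hM
    obtain ⟨P, hPY, hP⟩ := hcover b
    by_cases hPM : P = M
    · exact hPM ▸ hPY
    · exact absurd (hb P (hYF hPY) hPM) (hP M hM)
  have hNZ : N ∉ Z := fun h => PrefM.irrefl (hirr a) N (hN N h)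
  exact (Set.ncard_lt_ncard (hZY.ssubset_of_mem_notMem hNY hNZ)).not_ge hcard

end General

section ListPreferences

variable {A O : Type*}

def ListAdj (L : A → List O) (a : A) (o : O) : Prop := o ∈ L a

def ListPref [DecidableEq O] (L : A → List O) (a : A) (o o' : O) : Prop :=
  o ∈ L a ∧ o' ∈ L a ∧ (L a).idxOf o < (L a).idxOf o'

instance [DecidableEq O] (L : A → List O) (a : A) : DecidablePred (ListAdj L a) :=
  fun o => inferInstanceAs (Decidable (o ∈ L a))

instance [DecidableEq O] (L : A → List O) (a : A) : DecidableRel (ListPref L a) :=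
  fun o o' => inferInstanceAs (Decidable (o ∈ L a ∧ o' ∈ L a ∧ _))

theorem isStrictRanking_listPref [DecidableEq O] (L : A → List O) :
    IsStrictRanking (ListAdj L) (ListPref L) := by
  refine ⟨fun a => ⟨fun o h => lt_irrefl _ h.2.2, ?_, fun o o' h => ⟨h.1, h.2.1⟩⟩, ?_⟩
  · exact fun o o' o'' h h' => ⟨h.1, h'.2.1, h.2.2.trans h'.2.2⟩
  · intro a o o' ho ho' hne
    rcases lt_trichotomy ((L a).idxOf o) ((L a).idxOf o') with h | h | h
    · exact .inl ⟨ho, ho', h⟩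
    · exact absurd ((List.idxOf_inj ho).1 h) hne
    · exact .inr ⟨ho', ho, h⟩

end ListPreferences

namespace Counterexample

def prefs : Fin 5 → List (Fin 5) := ![[4, 0], [0, 1], [4, 2, 3], [1, 3], [4, 2]]

def M₁ : Fin 5 → Option (Fin 5) := some ∘ ![0, 1, 2, 3, 4]
def M₂ : Fin 5 → Option (Fin 5) := some ∘ ![0, 1, 4, 3, 2]
def N : Fin 5 → Option (Fin 5) := some ∘ ![4, 0, 3, 1, 2]

theorem eq_of_isPerfect {M : Fin 5 → Option (Fin 5)} (hM : IsPerfect (ListAdj prefs) M) :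
    M = M₁ ∨ M = M₂ ∨ M = N := by
  obtain ⟨f, rfl⟩ := hM.exists_eq_some_comp
  obtain ⟨hadj, hinj, -⟩ := isPerfect_some_comp_iff.1 hM
  have injective_choices : ∀ b0 ∈ prefs 0, ∀ b1 ∈ prefs 1, ∀ b2 ∈ prefs 2,
      ∀ b3 ∈ prefs 3, ∀ b4 ∈ prefs 4, [b0, b1, b2, b3, b4].Nodup →
        ![b0, b1, b2, b3, b4] = ![0, 1, 2, 3, 4] ∨ ![b0, b1, b2, b3, b4] = ![0, 1, 4, 3, 2] ∨
          ![b0, b1, b2, b3, b4] = ![4, 0, 3, 1, 2] := by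
    decide
  have hf : f = ![f 0, f 1, f 2, f 3, f 4] := by ext a; fin_cases a <;> rfl
  rw [hf, M₁, M₂, N]
  exact (injective_choices _ (hadj 0) _ (hadj 1) _ (hadj 2) _ (hadj 3) _ (hadj 4)
    (List.nodup_ofFn.2 hinj)).imp (congrArg _) (Or.imp (congrArg _) (congrArg _))

theorem isPerfect_M₁ : IsPerfect (ListAdj prefs) M₁ := isPerfect_some_comp_iff.2 (by decide)
theorem isPerfect_M₂ : IsPerfect (ListAdj prefs) M₂ := isPerfect_some_comp_iff.2 (by decide)
theorem isPerfect_N : IsPerfect (ListAdj prefs) N := isPerfect_some_comp_iff.2 (by decide)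

theorem paretoOptimal :
    ParetoOptimal (ListPref prefs) {M | IsPerfect (ListAdj prefs) M} {M₁, M₂} := by
  refine .of_forall_exists_strictly_best (fun a => ((isStrictRanking_listPref prefs).1 a).1) ?_
  rintro M (rfl | rfl)
  · refine ⟨4, fun P hP hne => ?_⟩
    rcases eq_of_isPerfect hP with rfl | rfl | rfl
    exacts [absurd rfl hne, by decide, by decide]
  · refine ⟨2, fun P hP hne => ?_⟩
    rcases eq_of_isPerfect hP with rfl | rfl | rfl
    exacts [by decide, absurd rfl hne, by decide]

theorem phiSet_eq : phiSet (ListPref prefs) {M₁, M₂} N = 2 := by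
  rw [phiSet_pair, Set.ncard_eq_toFinset_card']
  decide

theorem phiOne_eq : phiOne (ListPref prefs) N {M₁, M₂} = 3 := by
  rw [phiOne_pair, Set.ncard_eq_toFinset_card']
  decide

end Counterexample

/-- There is an assignment instance (strict rankings, feasible
alternatives the perfect matchings) and a Pareto-optimal set `{M₁, M₂}` of two perfect
matchings that is not popular: some perfect matching `N` satisfies
`μ({M₁, M₂}, N) < 0`. -/
theorem exists_pareto_optimal_pair_not_popular_assignment :
    ∃ (nA nO : ℕ) (adj : Fin nA → Fin nO → Prop)
      (pref : Fin nA → Fin nO → Fin nO → Prop),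
      IsStrictRanking adj pref ∧
      ∃ M₁ M₂ : Fin nA → Option (Fin nO), M₁ ≠ M₂ ∧
        IsPerfect adj M₁ ∧ IsPerfect adj M₂ ∧
        ParetoOptimal pref {M | IsPerfect adj M} {M₁, M₂} ∧
        ∃ N : Fin nA → Option (Fin nO), IsPerfect adj N ∧
          phiSet pref {M₁, M₂} N < phiOne pref N {M₁, M₂} :=
  open Counterexample in
  ⟨5, 5, ListAdj prefs, ListPref prefs, isStrictRanking_listPref prefs, M₁, M₂, by decide,
    isPerfect_M₁, isPerfect_M₂, paretoOptimal, N, isPerfect_N,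
    by rw [phiSet_eq, phiOne_eq]; decide⟩
end
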